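/- Let K̄ be an n×n row-stochastic matrix with strictly positive entries (Σⱼ K̄_{ij} = 1 for every i). For γ ∈ [0,∞)^{n×n} with row sums aᵢ = Σ_k γ_{ik}, define h(γ) = Σ_{ij} γ_{ij}·log(γ_{ij}/(aᵢ·K̄_{ij})) (terms with γ_{ij} = 0 contribute 0). Then for every matrix X ∈ ℝ^{n×n}, sup{Σ_{ij} X_{ij}·γ_{ij} − h(γ) : γ ∈ [0,∞)^{n×n}} equals 0 if log(Σⱼ K̄_{ij}·exp(X_{ij})) ≤ 0 for every i, and equals +∞ otherwise. -/

import Mathlib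

open scoped ENNReal NNReal Classical BigOperators

open Real Finset Filter

/-
Row by row, `log y ≤ y - 1` gives the Fenchel–Young bound
`x g - g log (g / c) ≤ c eˣ - g`, so a row of mass `a` contributes at most `a (Zᵢ - 1)`, where
`Zᵢ = Σⱼ K̄ᵢⱼ e^{Xᵢⱼ}`. Hence the supremum is `0` (attained at `γ = 0`) when every `Zᵢ ≤ 1`.
If `Zᵢ > 1` for some `i`, the Gibbs row `γᵢⱼ = t K̄ᵢⱼ e^{Xᵢⱼ}` (all other rows zero) has value
`t Zᵢ log Zᵢ`, which is unbounded as `t → ∞`.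
-/

lemma mul_sub_mul_log_div_le (x : ℝ) {g c : ℝ} (hg : 0 ≤ g) (hc : 0 ≤ c) (hgc : 0 < g → 0 < c) :
    x * g - g * log (g / c) ≤ c * exp x - g := by
  rcases hg.eq_or_lt with rfl | hg
  · simpa using mul_nonneg hc (exp_pos x).le
  have hc := hgc hg
  calc x * g - g * log (g / c) = g * log (c * exp x / g) := by
        rw [log_div hg.ne' hc.ne', log_div (by positivity) hg.ne', log_mul hc.ne' (exp_ne_zero x),
          log_exp]
        ring
    _ ≤ g * (c * exp x / g - 1) := by gcongr; exact log_le_sub_one_of_pos (by positivity)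
    _ = c * exp x - g := by field_simp

section

variable {ι κ : Type*} [Fintype ι] [Fintype κ]

noncomputable def rowObjective (x K : κ → ℝ) (γ : κ → ℝ≥0) : ℝ :=
  ∑ j, (x j * γ j - γ j * log (γ j / ((∑ k, (γ k : ℝ)) * K j)))

@[simp]
lemma rowObjective_zero (x K : κ → ℝ) : rowObjective x K 0 = 0 := by
  simp [rowObjective]

lemma rowObjective_le (x : κ → ℝ) {K : κ → ℝ} (hK : ∀ j, 0 < K j) (γ : κ → ℝ≥0) :
    rowObjective x K γ ≤ (∑ k, (γ k : ℝ)) * (∑ j, K j * exp (x j) - 1) := by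
  have ha : 0 ≤ ∑ k, (γ k : ℝ) := by positivity
  calc rowObjective x K γ ≤ ∑ j, ((∑ k, (γ k : ℝ)) * K j * exp (x j) - γ j) := by
        refine sum_le_sum fun j _ => mul_sub_mul_log_div_le _ (γ j).coe_nonneg
          (mul_nonneg ha (hK j).le) fun hj => mul_pos ?_ (hK j)
        exact hj.trans_le (single_le_sum (fun k _ => (γ k).coe_nonneg) (mem_univ j))
    _ = (∑ k, (γ k : ℝ)) * (∑ j, K j * exp (x j) - 1) := by
        rw [sum_sub_distrib, mul_sub, mul_one, mul_sum]
        simp only [mul_assoc]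

lemma rowObjective_gibbs (x : κ → ℝ) {K : κ → ℝ} (hK : ∀ j, 0 < K j) {t : ℝ} (ht : 0 < t) :
    rowObjective x K (fun j => (t * (K j * exp (x j))).toNNReal)
      = t * ((∑ j, K j * exp (x j)) * log (∑ j, K j * exp (x j))) := by
  set Z := ∑ j, K j * exp (x j)
  have hw : ∀ j, 0 < K j * exp (x j) := fun j => mul_pos (hK j) (exp_pos _)
  have hcoe : ∀ j, ((t * (K j * exp (x j))).toNNReal : ℝ) = t * (K j * exp (x j)) :=
    fun j => coe_toNNReal _ (mul_pos ht (hw j)).le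
  have hterm : ∀ j, x j * (t * (K j * exp (x j))) - t * (K j * exp (x j)) *
      log (t * (K j * exp (x j)) / ((∑ k, t * (K k * exp (x k))) * K j))
        = t * log Z * (K j * exp (x j)) := by
    intro j
    have hZ : 0 < Z := sum_pos' (fun k _ => (hw k).le) ⟨j, mem_univ j, hw j⟩
    rw [← mul_sum, show t * (K j * exp (x j)) / (t * Z * K j) = exp (x j) / Z by
      field_simp [(hK j).ne'], log_div (exp_ne_zero _) hZ.ne', log_exp]
    ring
  simp only [rowObjective, hcoe, hterm]
  rw [← mul_sum]
  ring

lemma iSup_sum_rowObjective_eq_zero {x K : ι → κ → ℝ} (hK : ∀ i j, 0 < K i j)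
    (hZ : ∀ i, ∑ j, K i j * exp (x i j) ≤ 1) :
    ⨆ γ : ι → κ → ℝ≥0, ((∑ i, rowObjective (x i) (K i) (γ i) : ℝ) : EReal) = 0 := by
  refine le_antisymm (iSup_le fun γ => EReal.coe_nonpos.2 <| sum_nonpos fun i _ => ?_)
    (le_iSup_of_le 0 (by simp))
  exact (rowObjective_le (x i) (hK i) (γ i)).trans <|
    mul_nonpos_of_nonneg_of_nonpos (by positivity) (by linarith [hZ i])

lemma iSup_sum_rowObjective_eq_top {x K : ι → κ → ℝ} (hK : ∀ i j, 0 < K i j) {i₀ : ι}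
    (hZ : 1 < ∑ j, K i₀ j * exp (x i₀ j)) :
    ⨆ γ : ι → κ → ℝ≥0, ((∑ i, rowObjective (x i) (K i) (γ i) : ℝ) : EReal) = ⊤ := by
  set Z := ∑ j, K i₀ j * exp (x i₀ j)
  have hZlogZ : 0 < Z * log Z := mul_pos (by linarith) (log_pos hZ)
  refine iSup_eq_top.2 fun b hb => ?_
  obtain ⟨r, hbr, -⟩ := EReal.lt_iff_exists_real_btwn.1 hb
  obtain ⟨t, hrt, ht⟩ := (((tendsto_id.atTop_mul_const hZlogZ).eventually_gt_atTop r).and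
    (eventually_gt_atTop 0)).exists
  refine ⟨Pi.single i₀ fun j => (t * (K i₀ j * exp (x i₀ j))).toNNReal, hbr.trans ?_⟩
  rw [Fintype.sum_eq_single i₀ fun i hi => by simp [Pi.single_eq_of_ne hi], Pi.single_eq_same,
    rowObjective_gibbs (x i₀) (hK i₀) ht]
  exact EReal.coe_lt_coe_iff.2 hrt

end

theorem conditionalEntropy_conjugate (n : ℕ) (Kbar : Fin n → Fin n → ℝ)
    (hpos : ∀ i j, 0 < Kbar i j)
    (X : Fin n → Fin n → ℝ) :
    (⨆ γ : Fin n → Fin n → ℝ≥0,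
        (((∑ i, ∑ j, X i j * (γ i j : ℝ)
            - ∑ i, ∑ j, (γ i j : ℝ) *
                Real.log ((γ i j : ℝ) / ((∑ k, (γ i k : ℝ)) * Kbar i j)) : ℝ) : EReal)))
    = if ∀ i, Real.log (∑ j, Kbar i j * Real.exp (X i j)) ≤ 0 then 0 else ⊤ := by
  simp only [← sum_sub_distrib]
  change ⨆ γ : Fin n → Fin n → ℝ≥0, ((∑ i, rowObjective (X i) (Kbar i) (γ i) : ℝ) : EReal) = _
  have hZ_nonneg : ∀ i, 0 ≤ ∑ j, Kbar i j * exp (X i j) :=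
    fun i => sum_nonneg fun j _ => (mul_pos (hpos i j) (exp_pos _)).le
  split_ifs with hlog
  · exact iSup_sum_rowObjective_eq_zero hpos fun i => (log_nonpos_iff (hZ_nonneg i)).1 (hlog i)
  · obtain ⟨i₀, hi₀⟩ := not_forall.1 hlog
    exact iSup_sum_rowObjective_eq_top hpos (not_le.1 (mt (log_nonpos_iff (hZ_nonneg i₀)).2 hi₀))
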